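/- arXiv:0903.0692 — 4 statements merged into one kernel-verified Lean document; each statement's English description precedes it below -/
import Mathlib

section
/- The maximum size of a set of pairwise non-commuting elements of the symmetric group S₄ (equivalently PGL(2,3)) is 10. -/
/-- A finset of group elements is pairwise non-commuting. -/
def pwNC {G : Type*} [Group G] (s : Finset G) : Prop :=
  (s : Set G).Pairwise fun a b => a * b ≠ b * a

/-- ω(G): the maximum size of a set of pairwise non-commuting elements of `G`. -/
noncomputable def omegaNC (G : Type*) [Group G] : ℕ :=
  sSup {n : ℕ | ∃ s : Finset G, pwNC s ∧ s.card = n}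

private def mk (v w : Fin 4 → Fin 4)
    (h1 : ∀ x, w (v x) = x := by decide) (h2 : ∀ x, v (w x) = x := by decide) :
    Equiv.Perm (Fin 4) := ⟨v, w, h1, h2⟩

private def bigSet : Finset (Equiv.Perm (Fin 4)) :=
  { mk ![0,1,3,2] ![0,1,3,2],
    mk ![0,2,1,3] ![0,2,1,3],
    mk ![0,2,3,1] ![0,3,1,2],
    mk ![0,3,2,1] ![0,3,2,1],
    mk ![1,2,0,3] ![2,0,1,3],
    mk ![1,2,3,0] ![3,0,1,2],
    mk ![1,3,0,2] ![2,0,3,1],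
    mk ![1,3,2,0] ![3,0,2,1],
    mk ![2,1,3,0] ![3,1,0,2],
    mk ![2,3,1,0] ![3,2,0,1] }

private lemma bigSet_pwNC : pwNC bigSet ∧ bigSet.card = 10 := by
  have h : ∀ a ∈ bigSet, ∀ b ∈ bigSet, a ≠ b → a * b ≠ b * a := by decide
  exact ⟨fun a ha b hb hab => h a ha b hb hab, rfl⟩

private def C : Fin 10 → Finset (Equiv.Perm (Fin 4)) :=
  ![{mk ![0,1,2,3] ![0,1,2,3], mk ![1,2,3,0] ![3,0,1,2], mk ![2,3,0,1] ![2,3,0,1], mk ![3,0,1,2] ![1,2,3,0]},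
    {mk ![0,1,2,3] ![0,1,2,3], mk ![1,3,0,2] ![2,0,3,1], mk ![2,0,3,1] ![1,3,0,2], mk ![3,2,1,0] ![3,2,1,0]},
    {mk ![0,1,2,3] ![0,1,2,3], mk ![1,0,3,2] ![1,0,3,2], mk ![2,3,1,0] ![3,2,0,1], mk ![3,2,0,1] ![2,3,1,0]},
    {mk ![0,1,2,3] ![0,1,2,3], mk ![0,2,3,1] ![0,3,1,2], mk ![0,3,1,2] ![0,2,3,1]},
    {mk ![0,1,2,3] ![0,1,2,3], mk ![1,2,0,3] ![2,0,1,3], mk ![2,0,1,3] ![1,2,0,3]},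
    {mk ![0,1,2,3] ![0,1,2,3], mk ![1,3,2,0] ![3,0,2,1], mk ![3,0,2,1] ![1,3,2,0]},
    {mk ![0,1,2,3] ![0,1,2,3], mk ![2,1,3,0] ![3,1,0,2], mk ![3,1,0,2] ![2,1,3,0]},
    {mk ![0,1,2,3] ![0,1,2,3], mk ![0,1,3,2] ![0,1,3,2], mk ![1,0,2,3] ![1,0,2,3], mk ![1,0,3,2] ![1,0,3,2]},
    {mk ![0,1,2,3] ![0,1,2,3], mk ![0,2,1,3] ![0,2,1,3], mk ![3,1,2,0] ![3,1,2,0], mk ![3,2,1,0] ![3,2,1,0]},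
    {mk ![0,1,2,3] ![0,1,2,3], mk ![0,3,2,1] ![0,3,2,1], mk ![2,1,0,3] ![2,1,0,3], mk ![2,3,0,1] ![2,3,0,1]}]

private lemma cover : ∀ g : Equiv.Perm (Fin 4), ∃ i : Fin 10, g ∈ C i := by decide

private lemma commC : ∀ i : Fin 10, ∀ a ∈ C i, ∀ b ∈ C i, a * b = b * a := by decide

private lemma upper (s : Finset (Equiv.Perm (Fin 4))) (hs : pwNC s) : s.card ≤ 10 := by
  have : s.card ≤ (Finset.univ : Finset (Fin 10)).card := by
    apply Finset.card_le_card_of_injOn (fun g => (cover g).choose)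
    · intro _ _; exact Finset.mem_univ _
    · intro a ha b hb hab
      by_contra hne
      have hab' : (cover a).choose = (cover b).choose := hab
      have hbmem : b ∈ C (cover a).choose := hab' ▸ (cover b).choose_spec
      exact hs ha hb hne (commC _ _ (cover a).choose_spec _ hbmem)
  simpa using this

/-- ω(S₄) = 10 (note PGL(2,3) ≅ S₄). -/
theorem stmt2 : omegaNC (Equiv.Perm (Fin 4)) = 10 := by
  have hbdd : BddAbove {n : ℕ | ∃ s : Finset (Equiv.Perm (Fin 4)), pwNC s ∧ s.card = n} :=
    ⟨10, fun n hn => by obtain ⟨s, hs, rfl⟩ := hn; exact upper s hs⟩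
  apply le_antisymm
  · exact csSup_le ⟨10, bigSet, bigSet_pwNC.1, bigSet_pwNC.2⟩
      (fun n hn => by obtain ⟨s, hs, rfl⟩ := hn; exact upper s hs)
  · exact le_csSup hbdd ⟨bigSet, bigSet_pwNC.1, bigSet_pwNC.2⟩
end

section
/- The maximum size of a set of pairwise non-commuting elements of the symmetric group S₅ (equivalently PGL(2,5)) is 31. -/
/-!
The symmetric group `S₅` is the union of its 31 maximal cyclic subgroups: ten of order 6, generated
by the products `(a b)(c d e)`, fifteen of order 4, generated by 4-cycles, and six of order 5,
generated by 5-cycles. Elements of one cyclic subgroup commute, so by pigeonhole a pairwise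
non-commuting set meets each of them at most once. Conversely the 31 chosen generators are
themselves pairwise non-commuting.
-/

open Equiv

section
variable {G : Type*} [Group G]

theorem omegaNC_eq {n : ℕ} (hmem : ∃ s : Finset G, pwNC s ∧ s.card = n)
    (hle : ∀ s : Finset G, pwNC s → s.card ≤ n) : omegaNC G = n :=
  IsGreatest.csSup_eq ⟨hmem, by rintro _ ⟨s, hs, rfl⟩; exact hle s hs⟩

theorem pwNC.card_le_of_commuting_cover {ι : Type*} [Fintype ι] {s : Finset G} (hs : pwNC s)
    (C : ι → Set G) (hC : ∀ i, (C i).Pairwise Commute) (hcover : ∀ g, ∃ i, g ∈ C i) :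
    s.card ≤ Fintype.card ι := by
  choose f hf using hcover
  rw [← Finset.card_univ]
  refine Finset.card_le_card_of_injOn f (fun _ _ => Finset.mem_coe.2 (Finset.mem_univ _)) ?_
  intro a ha b hb hab
  by_contra hne
  have hb' : b ∈ C (f a) := hab ▸ hf b
  exact hs ha hb hne (hC (f a) (hf a) hb' hne).eq

theorem pwNC.card_le_of_forall_exists_pow {s T : Finset G} (hs : pwNC s)
    (hT : ∀ g, ∃ t ∈ T, ∃ k : ℕ, t ^ k = g) : s.card ≤ T.card := by
  simpa using hs.card_le_of_commuting_cover (fun t : T => Set.range ((t : G) ^ · : ℕ → G))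
    (fun t => by rintro _ ⟨m, rfl⟩ _ ⟨n, rfl⟩ _; exact Commute.pow_pow_self _ m n)
    (fun g => by obtain ⟨t, ht, k, rfl⟩ := hT g; exact ⟨⟨t, ht⟩, k, rfl⟩)

theorem pwNC_toFinset [DecidableEq G] {l : List G}
    (hl : l.Pairwise fun a b => a * b ≠ b * a) : pwNC l.toFinset := by
  have : Std.Symm fun a b : G => a * b ≠ b * a := ⟨fun _ _ h e => h e.symm⟩
  rw [pwNC, List.coe_toFinset]
  exact hl.set_pairwise

theorem omegaNC_eq_length {l : List G} (hl : l.Pairwise fun a b => a * b ≠ b * a)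
    (hcover : ∀ g, ∃ t ∈ l, ∃ k : ℕ, t ^ k = g) : omegaNC G = l.length := by
  classical
  have hcard : l.toFinset.card = l.length :=
    List.toFinset_card_of_nodup (hl.imp fun h heq => h (by rw [heq]))
  refine omegaNC_eq ⟨l.toFinset, pwNC_toFinset hl, hcard⟩ fun s hs => ?_
  rw [← hcard]
  exact hs.card_le_of_forall_exists_pow fun g => by simpa using hcover g

end

def perm5CyclicGenerators : List (Perm (Fin 5)) :=
  [c[0, 1] * c[2, 3, 4], c[0, 2] * c[1, 3, 4], c[0, 3] * c[1, 2, 4], c[0, 4] * c[1, 2, 3],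
   c[0, 3, 4] * c[1, 2], c[0, 2, 4] * c[1, 3], c[0, 2, 3] * c[1, 4], c[0, 1, 4] * c[2, 3],
   c[0, 1, 3] * c[2, 4], c[0, 1, 2] * c[3, 4],
   c[0, 1, 2, 3], c[0, 1, 3, 2], c[0, 2, 1, 3], c[0, 1, 2, 4], c[0, 1, 4, 2], c[0, 2, 1, 4],
   c[0, 1, 3, 4], c[0, 1, 4, 3], c[0, 3, 1, 4], c[0, 2, 3, 4], c[0, 2, 4, 3], c[0, 3, 2, 4],
   c[1, 2, 3, 4], c[1, 2, 4, 3], c[1, 3, 2, 4],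
   c[0, 1, 2, 3, 4], c[0, 1, 2, 4, 3], c[0, 1, 3, 2, 4], c[0, 1, 3, 4, 2], c[0, 1, 4, 2, 3],
   c[0, 1, 4, 3, 2]]

set_option maxRecDepth 100000 in
theorem perm5CyclicGenerators_pairwise_not_commute :
    perm5CyclicGenerators.Pairwise fun a b => a * b ≠ b * a := by
  decide

set_option maxRecDepth 100000 in
set_option maxHeartbeats 4000000 in
theorem exists_perm5CyclicGenerators_pow_eq :
    ∀ g : Perm (Fin 5), ∃ t ∈ perm5CyclicGenerators, ∃ k < 6, t ^ k = g := by
  decide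

/-- ω(S₅) = 31 (note PGL(2,5) ≅ S₅). -/
theorem stmt3 : omegaNC (Equiv.Perm (Fin 5)) = 31 :=
  omegaNC_eq_length perm5CyclicGenerators_pairwise_not_commute fun g =>
    let ⟨t, ht, k, _, hk⟩ := exists_perm5CyclicGenerators_pow_eq g
    ⟨t, ht, k, hk⟩
end

section
/- Let G be a non-abelian AC-group (the centralizer of every non-central element is abelian) whose non-commuting graph has finite clique number. Then every set of pairwise non-commuting elements of G is contained in a maximum-size set of pairwise non-commuting elements. -/
/-- A clique of the non-commuting graph of `G`: a finset of non-central
elements that pairwise do not commute. -/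
def ncClq {G : Type*} [Group G] (s : Finset G) : Prop :=
  (∀ a ∈ s, a ∉ Subgroup.center G) ∧ (s : Set G).Pairwise fun a b => a * b ≠ b * a

/-- Let G be a non-abelian AC-group (all centralizers of non-central elements
are abelian) whose non-commuting graph has finite clique number. Then every
clique of the non-commuting graph is contained in a maximum clique. -/
theorem stmt8 {G : Type*} [Group G]
    (hna : ∃ a b : G, a * b ≠ b * a)
    (hAC : ∀ g : G, g ∉ Subgroup.center G →
      ∀ x ∈ Subgroup.centralizer {g}, ∀ y ∈ Subgroup.centralizer {g}, x * y = y * x)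
    (hfin : ∃ n : ℕ, ∀ s : Finset G, ncClq s → s.card ≤ n)
    (s : Finset G) (hs : ncClq s) :
    ∃ t : Finset G, s ⊆ t ∧ ncClq t ∧ ∀ u : Finset G, ncClq u → u.card ≤ t.card := by
  classical
  obtain ⟨n, hn⟩ := hfin
  set P : ℕ → Prop := fun k => ∃ t : Finset G, ncClq t ∧ t.card = k with hPdef
  have hP0 : P 0 := ⟨∅, ⟨by simp, by simp⟩, rfl⟩
  obtain ⟨t0, ht0, ht0c⟩ : P (Nat.findGreatest P n) :=
    Nat.findGreatest_spec (Nat.zero_le n) hP0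
  have hmax : ∀ u : Finset G, ncClq u → u.card ≤ t0.card := by
    intro u hu
    rw [ht0c]
    exact Nat.le_findGreatest (hn u hu) ⟨u, hu, rfl⟩
  set kept := t0.filter (fun x => ∀ a ∈ s, x * a ≠ a * x) with hkept
  set t := s ∪ kept with ht
  have hdis : Disjoint s kept := by
    rw [Finset.disjoint_left]
    intro a ha hat
    exact (Finset.mem_filter.mp hat).2 a ha rfl
  have htclq : ncClq t := by
    constructor
    · intro a ha
      rcases Finset.mem_union.mp ha with h | h
      · exact hs.1 a h
      · exact ht0.1 a (Finset.mem_filter.mp h).1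
    · intro a ha b hb hab
      rcases Finset.mem_union.mp (by exact_mod_cast ha) with h1 | h1 <;>
        rcases Finset.mem_union.mp (by exact_mod_cast hb) with h2 | h2
      · exact hs.2 h1 h2 hab
      · exact fun he => (Finset.mem_filter.mp h2).2 a h1 he.symm
      · exact (Finset.mem_filter.mp h1).2 b h2
      · exact ht0.2 (Finset.mem_filter.mp h1).1 (Finset.mem_filter.mp h2).1 hab
  refine ⟨t, Finset.subset_union_left, htclq, ?_⟩
  intro u hu
  have hsplit : t0.card = kept.card
      + (t0.filter (fun x => ¬ ∀ a ∈ s, x * a ≠ a * x)).card :=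
    (Finset.card_filter_add_card_filter_not _).symm
  set rem := t0.filter (fun x => ¬ ∀ a ∈ s, x * a ≠ a * x) with hrem
  -- map each removed element to an element of s it commutes with
  have hrex : ∀ x ∈ rem, ∃ a ∈ s, x * a = a * x := by
    intro x hx
    have := (Finset.mem_filter.mp hx).2
    push_neg at this
    exact this
  set f : G → G := fun x => if h : ∃ a ∈ s, x * a = a * x then h.choose else 1 with hf
  have hfs : ∀ x ∈ rem, f x ∈ s ∧ x * f x = f x * x := by
    intro x hx
    have h := hrex x hx
    simp only [hf, dif_pos h]
    exact ⟨h.choose_spec.1, h.choose_spec.2⟩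
  have hinj : rem.card ≤ s.card := by
    apply Finset.card_le_card_of_injOn f (fun x hx => (hfs x hx).1)
    intro x hx y hy hxy
    by_contra hne
    have hxa : x * f x = f x * x := (hfs x hx).2
    have hya : y * f x = f x * y := by
      rw [show f x = f y from hxy]; exact (hfs y hy).2
    set a := f x with ha
    have hanc : a ∉ Subgroup.center G := hs.1 a (hfs x hx).1
    have hxc : x ∈ Subgroup.centralizer ({a} : Set G) :=
      Subgroup.mem_centralizer_iff.mpr (by simpa using hxa.symm)
    have hyc : y ∈ Subgroup.centralizer ({a} : Set G) :=
      Subgroup.mem_centralizer_iff.mpr (by simpa using hya.symm)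
    have hxy' : x * y = y * x := hAC a hanc x hxc y hyc
    exact ht0.2 (Finset.mem_coe.mpr (Finset.mem_filter.mp hx).1)
      (Finset.mem_coe.mpr (Finset.mem_filter.mp hy).1) hne hxy'
  have hcardt : t.card = s.card + kept.card := Finset.card_union_of_disjoint hdis
  have key : t0.card ≤ t.card := by
    rw [hcardt, hsplit]
    omega
  exact (hmax u hu).trans key
end

section
/- Let G be a finite group with ω(G) = ω(G/Sol(G)) = 57. Then Z(G) = Sol(G). -/
/-! If the solvable radical `S` were not central, an element `z` not commuting with some `s ∈ S`
lets us lift a maximal non-commuting set of `G/S` to `G` by representatives that all fail to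
commute with `z` (replace a representative `g` commuting with `z` by `s * g`); adding `z` gives a
non-commuting set of size `ω(G/S) + 1`, contradicting `ω(G) = ω(G/S)`. -/

section omegaNC

variable {G : Type*} [Group G]

lemma bddAbove_card_pwNC [Finite G] :
    BddAbove {n : ℕ | ∃ s : Finset G, pwNC s ∧ s.card = n} := by
  have := Fintype.ofFinite G
  refine ⟨Fintype.card G, ?_⟩
  rintro n ⟨s, -, rfl⟩
  exact s.card_le_univ

lemma card_le_omegaNC [Finite G] {s : Finset G} (hs : pwNC s) : s.card ≤ omegaNC G :=
  le_csSup bddAbove_card_pwNC (show ∃ t : Finset G, pwNC t ∧ t.card = s.card from ⟨s, hs, rfl⟩)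

lemma exists_pwNC_card_eq_omegaNC [Finite G] : ∃ s : Finset G, pwNC s ∧ s.card = omegaNC G :=
  Nat.sSup_mem (s := {n | ∃ s : Finset G, pwNC s ∧ s.card = n}) ⟨0, ∅, by simp [pwNC], rfl⟩
    bddAbove_card_pwNC

lemma pwNC.image_of_leftInverse {H : Type*} [Group H] [DecidableEq G] {t : Finset H}
    (ht : pwNC t) (φ : G →* H) {r : H → G} (hr : Function.LeftInverse φ r) :
    pwNC (t.image r) := by
  rintro _ ha _ hb hab hcomm
  simp only [Finset.coe_image, Set.mem_image, Finset.mem_coe] at ha hb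
  obtain ⟨a, ha, rfl⟩ := ha
  obtain ⟨b, hb, rfl⟩ := hb
  refine ht ha hb (fun h => hab (h ▸ rfl)) ?_
  simpa only [map_mul, hr a, hr b] using congrArg φ hcomm

lemma exists_mk_eq_not_commute {N : Subgroup G} [N.Normal] {s z : G} (hs : s ∈ N)
    (hzs : ¬Commute z s) (q : G ⧸ N) : ∃ g : G, (g : G ⧸ N) = q ∧ ¬Commute z g := by
  obtain ⟨g, rfl⟩ := QuotientGroup.mk_surjective q
  by_cases hzg : Commute z g
  · refine ⟨s * g, ?_, fun hzsg => hzs ?_⟩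
    · rw [QuotientGroup.mk_mul, (QuotientGroup.eq_one_iff s).mpr hs, one_mul]
    · simpa using hzsg.mul_right hzg.inv_right
  · exact ⟨g, rfl, hzg⟩

theorem omegaNC_quotient_lt [Finite G] {N : Subgroup G} [N.Normal]
    (hN : ¬N ≤ Subgroup.center G) : omegaNC (G ⧸ N) < omegaNC G := by
  classical
  obtain ⟨s, hsN, hs⟩ := Set.not_subset.mp hN
  obtain ⟨z, hzs⟩ : ∃ z, ¬Commute z s := by
    simpa [Subgroup.mem_center_iff, Commute, SemiconjBy, eq_comm] using hs
  choose r hr hzr using exists_mk_eq_not_commute hsN hzs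
  replace hr : Function.LeftInverse (QuotientGroup.mk' N) r := hr
  obtain ⟨t, ht, htcard⟩ := exists_pwNC_card_eq_omegaNC (G := G ⧸ N)
  have hz : z ∉ t.image r := fun hmem => by
    obtain ⟨q, -, hq⟩ := Finset.mem_image.mp hmem
    exact hzr q (hq ▸ Commute.refl _)
  have hpw : pwNC (insert z (t.image r)) := by
    rw [pwNC, Finset.coe_insert, Set.pairwise_insert]
    refine ⟨ht.image_of_leftInverse (QuotientGroup.mk' N) hr, ?_⟩
    rintro _ hb -
    obtain ⟨q, -, rfl⟩ := Finset.mem_image.mp hb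
    exact ⟨hzr q, fun h => hzr q h.symm⟩
  have hcard := card_le_omegaNC hpw
  rw [Finset.card_insert_of_notMem hz, Finset.card_image_of_injective _ hr.injective,
    htcard] at hcard
  omega

end omegaNC

theorem stmt14_general {G : Type*} [Group G] [Finite G]
    (S : Subgroup G) [S.Normal]
    (hSmax : ∀ N : Subgroup G, N.Normal → IsSolvable N → N ≤ S)
    (hG : omegaNC G = 57) (hQ : omegaNC (G ⧸ S) = 57) :
    Subgroup.center G = S := by
  refine le_antisymm (hSmax _ inferInstance
    (Group.isSolvable_of_comm fun a b => Subtype.ext (Subgroup.mem_center_iff.mp b.2 a))) ?_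
  by_contra hS
  have := omegaNC_quotient_lt hS
  omega

/-- Let G be a finite group with ω(G) = ω(G/Sol(G)) = 57, where S = Sol(G) is
the solvable radical of G. Then Z(G) = Sol(G). -/
theorem stmt14 {G : Type*} [Group G] [Finite G]
    (S : Subgroup G) [S.Normal] (hSsol : IsSolvable S)
    (hSmax : ∀ N : Subgroup G, N.Normal → IsSolvable N → N ≤ S)
    (hG : omegaNC G = 57) (hQ : omegaNC (G ⧸ S) = 57) :
    Subgroup.center G = S :=
  stmt14_general S hSmax hG hQ
end
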